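/- Let M ≥ 3 and let A ⊊ {0,...,M-1} be a nonempty proper alphabet (so δ = log|A|/log M < 1). Then there exists k such that r_k = ‖1_{C_k} F_N 1_{C_k}‖ < 1, where N = M^k. In fact this holds for any k with M^k − (M−1)^k ≥ (M−1)M^{k−1}. -/

import Mathlib

open scoped Matrix

/-- The unitary discrete Fourier transform matrix
`(F_N)_{jℓ} = N^{-1/2} exp(-2πi jℓ/N)`. -/
noncomputable def dftMat (N : ℕ) : Matrix (Fin N) (Fin N) ℂ :=
  Matrix.of fun j ℓ => ((N : ℂ) ^ (-(1/2 : ℂ))) *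
    Complex.exp (-2 * Real.pi * Complex.I * ((j : ℕ) : ℂ) * ((ℓ : ℕ) : ℂ) / (N : ℂ))

open scoped Classical in
/-- The diagonal matrix of the coordinate projection onto indices in `S`. -/
noncomputable def projMat {N : ℕ} (S : Set ℕ) : Matrix (Fin N) (Fin N) ℂ :=
  Matrix.of fun j ℓ => if j = ℓ ∧ (j : ℕ) ∈ S then 1 else 0

/-- The discrete Cantor set: numbers all of whose base-`M` digits in positions `< k`
lie in the alphabet `A`. Restricted to `{0,…,M^k-1}` this is
`C_k = {a₀ + a₁M + ⋯ + a_{k-1}M^{k-1} : a_j ∈ A}`. -/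
def cantorDigits (M k : ℕ) (A : Finset ℕ) : Set ℕ :=
  {n | ∀ i < k, (n / M ^ i) % M ∈ A}

/-- The operator `1_{C_k} F_N 1_{C_k}` on `ℂ^N`, `N = M^k`, with the Euclidean norm. -/
noncomputable def cantorOp (M k : ℕ) (A : Finset ℕ) :
    EuclideanSpace ℂ (Fin (M ^ k)) →L[ℂ] EuclideanSpace ℂ (Fin (M ^ k)) :=
  LinearMap.toContinuousLinearMap
    (Matrix.toEuclideanLin
      (projMat (cantorDigits M k A) * dftMat (M ^ k) * projMat (cantorDigits M k A)))

/-- `r_k = ‖1_{C_k} F_N 1_{C_k}‖`, the operator norm on `ℂ^N`, `N = M^k`. -/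
noncomputable def rk (M : ℕ) (A : Finset ℕ) (k : ℕ) : ℝ := ‖cantorOp M k A‖

/-!
`1_C F 1_C` is a contraction, being a unitary between two coordinate projections, and its norm is
attained on the compact unit sphere; so `r_k = 1` would give `x ≠ 0` with `supp x ⊆ C_k` and
`supp (F x) ⊆ C_k`. Pick a digit `d ∉ A`. Rotating the indices by `(M-1-d)M^{k-1}` turns the top
digit `d` into `M-1`, so it moves `C_k` into `[0, (M-1)M^{k-1})`, and `x` becomes the coefficient
vector of a polynomial of degree `< (M-1)M^{k-1}` vanishing at the `N`-th roots of unity `ω^j`,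
`j ∉ C_k`. There are at least `M^k - (M-1)^k` of them, hence `x = 0`. By Bernoulli's inequality
`k = (M-1)^2 + 1` satisfies the counting condition.
-/

open Complex Finset Polynomial

theorem IsPrimitiveRoot.geom_sum_inv_pow_mul_pow {K : Type*} [Field K] {ζ : K} {N : ℕ}
    (hζ : IsPrimitiveRoot ζ N) {j ℓ : ℕ} (hj : j < N) (hℓ : ℓ < N) :
    ∑ m ∈ range N, ((ζ ^ j)⁻¹ * ζ ^ ℓ) ^ m = if j = ℓ then (N : K) else 0 := by
  have hζj : ζ ^ j ≠ 0 := pow_ne_zero _ (hζ.ne_zero (by omega))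
  split_ifs with h
  · simp [h, inv_mul_cancel₀ (h ▸ hζj)]
  · have hne : (ζ ^ j)⁻¹ * ζ ^ ℓ ≠ 1 := fun h1 =>
      h (hζ.pow_inj hj hℓ (inv_mul_eq_one₀ hζj |>.mp h1))
    rw [geom_sum_eq hne, mul_pow, inv_pow, ← pow_mul, ← pow_mul, mul_comm j, mul_comm ℓ,
      pow_mul, pow_mul, hζ.pow_eq_one]
    simp

lemma dftMat_apply (N : ℕ) (j ℓ : Fin N) :
    dftMat N j ℓ = (N : ℂ) ^ (-(1 / 2 : ℂ)) * (exp (2 * Real.pi * I / N))⁻¹ ^ ((j : ℕ) * ℓ) := by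
  rw [dftMat, Matrix.of_apply, inv_pow, ← exp_nat_mul, ← exp_neg]
  congr 2
  push_cast
  ring

lemma conj_natCast_cpow_neg_half_mul_self (N : ℕ) :
    starRingEnd ℂ ((N : ℂ) ^ (-(1 / 2 : ℂ))) * (N : ℂ) ^ (-(1 / 2 : ℂ)) = (N : ℂ)⁻¹ := by
  have hreal : (N : ℂ) ^ (-(1 / 2 : ℂ)) = ((N : ℝ) ^ (-(1 / 2 : ℝ)) : ℝ) := by
    rw [ofReal_cpow (Nat.cast_nonneg N)]; push_cast; rfl
  rw [hreal, conj_ofReal, ← ofReal_mul, ← Real.rpow_add' (Nat.cast_nonneg N) (by norm_num)]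
  norm_num [Real.rpow_neg_one]

theorem dftMat_conjTranspose_mul_self (N : ℕ) : (dftMat N)ᴴ * dftMat N = 1 := by
  obtain rfl | hN := eq_or_ne N 0
  · exact Subsingleton.elim _ _
  set ζ := (exp (2 * Real.pi * I / N))⁻¹ with hζdef
  have hζ : IsPrimitiveRoot ζ N := (isPrimitiveRoot_exp N hN).inv
  have hconj : starRingEnd ℂ ζ = ζ⁻¹ := (inv_eq_conj (hζ.norm'_eq_one hN)).symm
  ext j ℓ
  calc ((dftMat N)ᴴ * dftMat N) j ℓ
      = (N : ℂ)⁻¹ * ∑ m ∈ range N, ((ζ ^ (j : ℕ))⁻¹ * ζ ^ (ℓ : ℕ)) ^ m := by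
        rw [Matrix.mul_apply, ← Fin.sum_univ_eq_sum_range, mul_sum,
          ← conj_natCast_cpow_neg_half_mul_self]
        refine sum_congr rfl fun m _ => ?_
        simp only [Matrix.conjTranspose_apply, dftMat_apply, ← hζdef, RCLike.star_def,
          map_mul, map_pow, hconj]
        ring
    _ = (1 : Matrix (Fin N) (Fin N) ℂ) j ℓ := by
        rw [hζ.geom_sum_inv_pow_mul_pow j.isLt ℓ.isLt, Matrix.one_apply]
        by_cases h : j = ℓ
        · simp [h, hN]
        · simp [h, Fin.val_injective.ne h]

theorem Matrix.norm_toEuclideanLin_of_conjTranspose_mul_self {𝕜 n : Type*} [RCLike 𝕜]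
    [Fintype n] [DecidableEq n] {U : Matrix n n 𝕜} (hU : Uᴴ * U = 1) (x : EuclideanSpace 𝕜 n) :
    ‖toEuclideanLin U x‖ = ‖x‖ := by
  have hinner : inner 𝕜 (toEuclideanLin U x) (toEuclideanLin U x) = inner 𝕜 x x := by
    rw [← LinearMap.adjoint_inner_left, ← toEuclideanLin_conjTranspose_eq_adjoint,
      ← LinearMap.comp_apply, ← toLpLin_mul_same, hU, toLpLin_one, LinearMap.id_apply]
  rw [norm_eq_sqrt_re_inner (𝕜 := 𝕜), hinner, ← norm_eq_sqrt_re_inner]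

theorem ContinuousLinearMap.norm_lt_one_of_norm_apply_lt {𝕜 E F : Type*} [RCLike 𝕜]
    [NormedAddCommGroup E] [NormedSpace 𝕜 E] [ProperSpace E] [NormedAddCommGroup F]
    [NormedSpace 𝕜 F] (f : E →L[𝕜] F) (hf : ∀ x ≠ 0, ‖f x‖ < ‖x‖) : ‖f‖ < 1 := by
  cases subsingleton_or_nontrivial E
  · simp [Subsingleton.elim f 0]
  have : NormedSpace ℝ E := NormedSpace.restrictScalars ℝ 𝕜 E
  have hK : IsCompact ((fun x => ‖f x‖) '' Metric.sphere 0 1) :=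
    (isCompact_sphere 0 1).image (by fun_prop)
  obtain ⟨x, hx, hfx⟩ := hK.sSup_mem ((NormedSpace.sphere_nonempty.mpr zero_le_one).image _)
  rw [f.sSup_sphere_eq_norm] at hfx
  rw [← hfx, ← mem_sphere_zero_iff_norm.mp hx]
  exact hf x (ne_zero_of_mem_unit_sphere ⟨x, hx⟩)

section projMat

open scoped Classical

variable {N : ℕ} (S : Set ℕ) (v : EuclideanSpace ℂ (Fin N))

lemma toEuclideanLin_projMat_apply (j : Fin N) :
    Matrix.toEuclideanLin (projMat S) v j = if (j : ℕ) ∈ S then v j else 0 := by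
  simp [projMat, Matrix.mulVec, dotProduct, ite_and]

lemma norm_toEuclideanLin_projMat_sq_add :
    ‖Matrix.toEuclideanLin (projMat S) v‖ ^ 2
      + ∑ j ∈ univ.filter (fun j : Fin N => (j : ℕ) ∉ S), ‖v j‖ ^ 2 = ‖v‖ ^ 2 := by
  rw [EuclideanSpace.norm_sq_eq, EuclideanSpace.norm_sq_eq,
    ← sum_filter_add_sum_filter_not univ (fun j : Fin N => (j : ℕ) ∈ S) (fun j => ‖v j‖ ^ 2)]
  congr 1
  rw [sum_filter]
  refine sum_congr rfl fun j _ => ?_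
  rw [toEuclideanLin_projMat_apply]
  split_ifs <;> simp

lemma norm_toEuclideanLin_projMat_le : ‖Matrix.toEuclideanLin (projMat S) v‖ ≤ ‖v‖ := by
  refine (sq_le_sq₀ (norm_nonneg _) (norm_nonneg _)).mp ?_
  rw [← norm_toEuclideanLin_projMat_sq_add S v]
  exact le_add_of_nonneg_right (sum_nonneg fun j _ => by positivity)

lemma toEuclideanLin_projMat_eq_self_iff :
    Matrix.toEuclideanLin (projMat S) v = v ↔ ∀ j : Fin N, (j : ℕ) ∉ S → v j = 0 := by
  refine ⟨fun h j hj => ?_, fun h => ?_⟩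
  · rw [← h, toEuclideanLin_projMat_apply, if_neg hj]
  · ext j
    rw [toEuclideanLin_projMat_apply]
    split_ifs with hj
    exacts [rfl, (h j hj).symm]

lemma toEuclideanLin_projMat_eq_self_of_norm_eq
    (h : ‖Matrix.toEuclideanLin (projMat S) v‖ = ‖v‖) :
    Matrix.toEuclideanLin (projMat S) v = v := by
  have hsum := norm_toEuclideanLin_projMat_sq_add S v
  rw [h, add_eq_left, sum_eq_zero_iff_of_nonneg fun j _ => by positivity] at hsum
  refine (toEuclideanLin_projMat_eq_self_iff S v).mpr fun j hj => ?_
  simpa using hsum j (mem_filter.mpr ⟨mem_univ j, hj⟩)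

end projMat

theorem norm_projMat_mul_mul_projMat_apply_lt {N : ℕ} (S : Set ℕ)
    {U : Matrix (Fin N) (Fin N) ℂ} (hU : Uᴴ * U = 1)
    (hS : ∀ u : EuclideanSpace ℂ (Fin N), Matrix.toEuclideanLin (projMat S) u = u →
      Matrix.toEuclideanLin (projMat S) (Matrix.toEuclideanLin U u) = Matrix.toEuclideanLin U u →
      u = 0)
    {x : EuclideanSpace ℂ (Fin N)} (hx : x ≠ 0) :
    ‖Matrix.toEuclideanLin (projMat S * U * projMat S) x‖ < ‖x‖ := by
  set P := Matrix.toEuclideanLin (projMat S (N := N))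
  rw [Matrix.toLpLin_mul_same, Matrix.toLpLin_mul_same, LinearMap.comp_apply, LinearMap.comp_apply]
  have hPUPx := norm_toEuclideanLin_projMat_le S (Matrix.toEuclideanLin U (P x))
  have hUPx := Matrix.norm_toEuclideanLin_of_conjTranspose_mul_self hU (P x)
  have hPx := norm_toEuclideanLin_projMat_le S x
  refine lt_of_le_of_ne (by linarith) fun heq => hx ?_
  have hPx_eq : P x = x := toEuclideanLin_projMat_eq_self_of_norm_eq S x (by linarith)
  rw [hPx_eq] at heq hUPx hPUPx
  exact hS x hPx_eq (toEuclideanLin_projMat_eq_self_of_norm_eq S _ (by linarith))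

theorem IsPrimitiveRoot.eq_zero_of_sum_pow_mul_eq_zero {R : Type*} [CommRing R] [IsDomain R]
    {ω : R} {N : ℕ} (hω : IsPrimitiveRoot ω N) (u : Fin N → R) {s B : ℕ}
    (hu : ∀ ℓ, u ℓ ≠ 0 → ((ℓ : ℕ) + s) % N < B) {J : Finset (Fin N)} (hJ : B ≤ #J)
    (hvan : ∀ j ∈ J, ∑ ℓ : Fin N, ω ^ ((j : ℕ) * (ℓ : ℕ)) * u ℓ = 0) : u = 0 := by
  classical
  have hinj : Function.Injective fun ℓ : Fin N => ((ℓ : ℕ) + s) % N := fun ℓ ℓ' h =>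
    Fin.ext <| by simpa [Nat.ModEq, Nat.mod_eq_of_lt ℓ.isLt, Nat.mod_eq_of_lt ℓ'.isLt] using
      Nat.ModEq.add_right_cancel' s h
  set q : R[X] := ∑ ℓ : Fin N, monomial (((ℓ : ℕ) + s) % N) (u ℓ)
  have hcoeff (ℓ : Fin N) : q.coeff (((ℓ : ℕ) + s) % N) = u ℓ := by
    simp only [q, finsetSum_coeff, coeff_monomial, hinj.eq_iff, sum_ite_eq', mem_univ, if_true]
  have hdeg : q.degree < #J := by
    refine (degree_sum_le _ _).trans_lt <|
      (Finset.sup_lt_iff (WithBot.bot_lt_coe _)).2 fun ℓ _ => ?_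
    by_cases hℓ : u ℓ = 0
    · simp [hℓ]
    · exact (degree_monomial_le _ _).trans_lt (WithBot.coe_lt_coe.2 ((hu ℓ hℓ).trans_le hJ))
  have heval : ∀ j ∈ J, q.eval (ω ^ (j : ℕ)) = 0 := by
    intro j hj
    have hroot : (ω ^ (j : ℕ)) ^ N = 1 := by
      rw [← pow_mul, mul_comm, pow_mul, hω.pow_eq_one, one_pow]
    calc q.eval (ω ^ (j : ℕ))
        = ω ^ ((j : ℕ) * s) * ∑ ℓ : Fin N, ω ^ ((j : ℕ) * (ℓ : ℕ)) * u ℓ := by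
          simp only [q, eval_finsetSum, eval_monomial, ← pow_eq_pow_mod _ hroot, mul_sum]
          refine sum_congr rfl fun ℓ _ => ?_
          ring
      _ = 0 := by rw [hvan j hj, mul_zero]
  have hq : q = 0 := eq_zero_of_degree_lt_of_eval_index_eq_zero J
    (fun a _ b _ h => Fin.ext (hω.pow_inj a.isLt b.isLt h)) hdeg heval
  funext ℓ
  rw [← hcoeff, hq, coeff_zero, Pi.zero_apply]

theorem Nat.add_mul_mod_mul_lt_of_div_mod_ne {M p n d : ℕ} (hp : 0 < p) (hd : d < M)
    (hnd : n / p % M ≠ d) : (n + (M - 1 - d) * p) % (p * M) < (M - 1) * p := by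
  obtain ⟨m, rfl⟩ : ∃ m, M = m + 2 := by
    refine ⟨M - 2, ?_⟩
    rcases Nat.lt_or_ge M 2 with h | h
    · obtain rfl : M = 1 := by omega
      exact absurd (by rw [Nat.mod_one]; omega) hnd
    · omega
  have ht : (n / p % (m + 2) + (m + 2 - 1 - d)) % (m + 2) ≤ m := by
    have ha : n / p % (m + 2) < m + 2 := Nat.mod_lt _ (by omega)
    rcases lt_or_ge (n / p % (m + 2) + (m + 2 - 1 - d)) (m + 2) with h | h
    · rw [Nat.mod_eq_of_lt h]; omega
    · rw [Nat.mod_eq_sub_mod h, Nat.mod_eq_of_lt (by omega)]; omega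
  rw [Nat.mod_mul, Nat.add_mul_mod_self_right, Nat.add_mul_div_right _ _ hp, ← Nat.mod_add_mod]
  calc _ < p + p * m := Nat.add_lt_add_of_lt_of_le (Nat.mod_lt _ hp) (Nat.mul_le_mul_left p ht)
    _ = (m + 2 - 1) * p := by rw [show m + 2 - 1 = m + 1 by omega]; ring

theorem pow_succ_le_succ_pow_sq (m : ℕ) : m ^ (m ^ 2 + 1) ≤ (m + 1) ^ (m ^ 2) := by
  rcases m.eq_zero_or_pos with rfl | hm
  · simp
  have hbern := (Commute.all m 1).pow_add_mul_le_add_pow_of_sq_nonneg (by positivity)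
    (by positivity) (by positivity) (by positivity) (m ^ 2)
  have hexp : m ^ 2 - 1 + 2 = m ^ 2 + 1 := by have := Nat.one_le_pow 2 m hm; omega
  calc m ^ (m ^ 2 + 1) = m ^ 2 * m ^ (m ^ 2 - 1) * 1 := by rw [← hexp, pow_add]; ring
    _ ≤ m ^ (m ^ 2) + m ^ 2 * m ^ (m ^ 2 - 1) * 1 := by omega
    _ ≤ (m + 1) ^ (m ^ 2) := by exact_mod_cast hbern

theorem exists_mul_pow_le_pow_sub_pow (M : ℕ) :
    ∃ k : ℕ, 1 ≤ k ∧ (M - 1) * M ^ (k - 1) ≤ M ^ k - (M - 1) ^ k := by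
  refine ⟨(M - 1) ^ 2 + 1, by omega, ?_⟩
  rcases M with _ | m
  · simp
  simp only [add_tsub_cancel_right, pow_succ _ (m ^ 2)]
  apply Nat.le_sub_of_add_le
  calc m * (m + 1) ^ m ^ 2 + m ^ (m ^ 2 + 1) ≤ m * (m + 1) ^ m ^ 2 + (m + 1) ^ m ^ 2 :=
        Nat.add_le_add_left (pow_succ_le_succ_pow_sq m) _
    _ = (m + 1) ^ m ^ 2 * (m + 1) := by ring

section cantor

open scoped Classical

theorem card_filter_mem_cantorDigits_le (M k : ℕ) (A : Finset ℕ) :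
    #{j : Fin (M ^ k) | (j : ℕ) ∈ cantorDigits M k A} ≤ #A ^ k := by
  calc #{j : Fin (M ^ k) | (j : ℕ) ∈ cantorDigits M k A}
      ≤ #(Fintype.piFinset fun _ : Fin k => A) := by
        refine card_le_card_of_injOn (fun j i => (finFunctionFinEquiv.symm j i : ℕ)) ?_ ?_
        · intro j hj
          rw [mem_coe, mem_filter] at hj
          simpa [Fintype.mem_piFinset, finFunctionFinEquiv_symm_apply_val] using
            fun i : Fin k => hj.2 i i.isLt
        · intro j _ j' _ h
          exact finFunctionFinEquiv.symm.injective (funext fun i => Fin.ext (congrFun h i))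
    _ = #A ^ k := by simp

theorem eq_zero_of_projMat_cantorDigits {M k : ℕ} {A : Finset ℕ} (hk : 1 ≤ k) (hA : #A < M)
    (hcond : (M - 1) * M ^ (k - 1) ≤ M ^ k - (M - 1) ^ k) (u : EuclideanSpace ℂ (Fin (M ^ k)))
    (hu : Matrix.toEuclideanLin (projMat (cantorDigits M k A)) u = u)
    (hFu : Matrix.toEuclideanLin (projMat (cantorDigits M k A))
      (Matrix.toEuclideanLin (dftMat (M ^ k)) u) = Matrix.toEuclideanLin (dftMat (M ^ k)) u) :
    u = 0 := by
  obtain ⟨d, hdM, hdA⟩ : ∃ d ∈ range M, d ∉ A := exists_mem_notMem_of_card_lt_card (by simpa)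
  rw [mem_range] at hdM
  have hN : M ^ k ≠ 0 := pow_ne_zero _ (by omega)
  have hNsplit : M ^ k = M ^ (k - 1) * M := by rw [← pow_succ]; congr; omega
  have hζ : IsPrimitiveRoot (exp (2 * Real.pi * I / ↑(M ^ k)))⁻¹ (M ^ k) :=
    (isPrimitiveRoot_exp _ hN).inv
  rw [toEuclideanLin_projMat_eq_self_iff] at hu hFu
  suffices u.ofLp = 0 from WithLp.ofLp_injective 2 this
  refine hζ.eq_zero_of_sum_pow_mul_eq_zero u.ofLp (s := (M - 1 - d) * M ^ (k - 1))
    (B := (M - 1) * M ^ (k - 1))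
    (J := {j | (j : ℕ) ∉ cantorDigits M k A}) (fun ℓ hℓ => ?_) ?_ (fun j hj => ?_)
  · have hC : (ℓ : ℕ) ∈ cantorDigits M k A := by_contra fun h => hℓ (hu ℓ h)
    have := Nat.add_mul_mod_mul_lt_of_div_mod_ne (n := ℓ) (pow_pos (by omega) (k - 1)) hdM
      fun h => hdA (h ▸ hC (k - 1) (by omega))
    rwa [← hNsplit] at this
  · have hcard := card_filter_add_card_filter_not (s := univ)
      (fun j : Fin (M ^ k) => (j : ℕ) ∈ cantorDigits M k A)
    rw [card_univ, Fintype.card_fin] at hcard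
    have hC := card_filter_mem_cantorDigits_le M k A
    have hAk : #A ^ k ≤ (M - 1) ^ k := Nat.pow_le_pow_left (by omega) k
    omega
  · have hvan := hFu j (mem_filter.mp hj).2
    simp only [Matrix.ofLp_toLpLin, Matrix.toLin'_apply, Matrix.mulVec, dotProduct,
      dftMat_apply] at hvan
    rw [sum_congr rfl fun ℓ _ => mul_assoc _ _ _, ← mul_sum] at hvan
    exact (mul_eq_zero.mp hvan).resolve_left
      (cpow_ne_zero_iff.mpr (.inl (Nat.cast_ne_zero.mpr hN)))

end cantor

theorem stmt9_general (M : ℕ) (A : Finset ℕ) (hprop : A.card < M) :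
    (∀ k : ℕ, 1 ≤ k → (M - 1) * M ^ (k - 1) ≤ M ^ k - (M - 1) ^ k → rk M A k < 1) ∧
    ∃ k : ℕ, 1 ≤ k ∧ rk M A k < 1 := by
  have hrk (k : ℕ) (hk : 1 ≤ k) (hcond : (M - 1) * M ^ (k - 1) ≤ M ^ k - (M - 1) ^ k) :
      rk M A k < 1 :=
    (cantorOp M k A).norm_lt_one_of_norm_apply_lt fun _ hx =>
      norm_projMat_mul_mul_projMat_apply_lt _ (dftMat_conjTranspose_mul_self _)
        (eq_zero_of_projMat_cantorDigits hk hprop hcond) hx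
  obtain ⟨k, hk, hcond⟩ := exists_mul_pow_le_pow_sub_pow M
  exact ⟨hrk, k, hk, hrk k hk hcond⟩

/-- If `A ⊊ {0,…,M-1}` is a nonempty proper alphabet, then `r_k < 1` for any `k` with
`M^k − (M−1)^k ≥ (M−1)M^{k−1}`; in particular `r_k < 1` for some `k`. -/
theorem stmt9 (M : ℕ) (hM : 3 ≤ M) (A : Finset ℕ) (hA : A.Nonempty)
    (hAM : ∀ a ∈ A, a < M) (hprop : A.card < M) :
    (∀ k : ℕ, 1 ≤ k → (M - 1) * M ^ (k - 1) ≤ M ^ k - (M - 1) ^ k → rk M A k < 1) ∧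
    ∃ k : ℕ, 1 ≤ k ∧ rk M A k < 1 :=
  stmt9_general M A hprop
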